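/- Let U, V be Hilbert spaces, b : U × V → ℝ a bounded bilinear form inducing an isomorphism B ∈ Lis(U,V'), U^δ ⊂ U and F^δ ⊂ V' finite-dimensional subspaces, and V̄̄^δ ⊆ V a closed subspace with inf-sup constant γ̄̄^δ := inf over pairs (u,f) ∈ U^δ × F^δ with Bu ≠ f of sup_{0≠v∈V̄̄^δ} (b(u,v)−f(v))/(‖u−B⁻¹f‖_U ‖v‖_V) > 0. Define R^δ(u;f) ∈ V̄̄^δ by ⟨R^δ(u;f), v⟩_V = b(u,v) − f(v) for v ∈ V̄̄^δ. Then for all (u,f) ∈ U^δ × F^δ: γ̄̄^δ ‖u − B⁻¹f‖_U ≤ ‖R^δ(u;f)‖_V ≤ ‖B‖_{L(U,V')} ‖u − B⁻¹f‖_U. -/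

import Mathlib

open scoped RealInnerProductSpace

/-!
Both bounds come from `‖R^δ(u;f)‖ = sup_{0 ≠ v ∈ V̄̄^δ} (b(u,v) − f(v)) / ‖v‖`. This is at most the
dual norm `‖Bu − f‖_{V'} = ‖B(u − B⁻¹f)‖_{V'} ≤ ‖B‖ ‖u − B⁻¹f‖_U`, and after division by
`‖u − B⁻¹f‖_U` it dominates the inf-sup quotient, hence `γ̄̄^δ`.
-/

section RieszRepresenter

variable {V : Type*} [NormedAddCommGroup V] [InnerProductSpace ℝ V] {W : Submodule ℝ V} {r : V}

theorem norm_le_opNorm_of_inner_eq {φ : StrongDual ℝ V} (hr : r ∈ W)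
    (h : ∀ v ∈ W, ⟪r, v⟫ = φ v) : ‖r‖ ≤ ‖φ‖ := by
  have hsq : ‖r‖ * ‖r‖ ≤ ‖φ‖ * ‖r‖ := by
    rw [← real_inner_self_eq_norm_mul_norm, h r hr]
    exact (le_abs_self _).trans (φ.le_opNorm r)
  nlinarith [norm_nonneg r, norm_nonneg φ]

theorem sSup_le_div_of_inner_eq {φ : V → ℝ} {c : ℝ} (hc : 0 < c)
    (h : ∀ v ∈ W, ⟪r, v⟫ = φ v) :
    sSup {s : ℝ | ∃ v ∈ W, v ≠ 0 ∧ s = φ v / (c * ‖v‖)} ≤ ‖r‖ / c := by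
  refine Real.sSup_le ?_ (by positivity)
  rintro s ⟨v, hv, hv0, rfl⟩
  have hv_pos : 0 < ‖v‖ := norm_pos_iff.2 hv0
  rw [← mul_div_mul_right ‖r‖ c hv_pos.ne', mul_comm c]
  gcongr
  exact h v hv ▸ real_inner_le_norm r v

end RieszRepresenter

theorem stmt2_general
    {U V : Type*}
    [NormedAddCommGroup U] [InnerProductSpace ℝ U]
    [NormedAddCommGroup V] [InnerProductSpace ℝ V]
    (B : U ≃L[ℝ] StrongDual ℝ V)
    (Uδ : Submodule ℝ U)
    (Fδ : Submodule ℝ (StrongDual ℝ V))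
    (W : Submodule ℝ V)
    (γ : ℝ)
    (hinf : ∀ u ∈ Uδ, ∀ f ∈ Fδ, B u ≠ f →
      γ ≤ sSup {r : ℝ | ∃ v ∈ W, v ≠ 0 ∧
        r = (B u v - f v) / (‖u - B.symm f‖ * ‖v‖)})
    (R : U → StrongDual ℝ V → V)
    (hR_mem : ∀ u f, R u f ∈ W)
    (hR : ∀ u f, ∀ v ∈ W, ⟪R u f, v⟫ = B u v - f v) :
    ∀ u ∈ Uδ, ∀ f ∈ Fδ,
      γ * ‖u - B.symm f‖ ≤ ‖R u f‖ ∧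
        ‖R u f‖ ≤ ‖(B : U →L[ℝ] StrongDual ℝ V)‖ * ‖u - B.symm f‖ := by
  intro u hu f hf
  refine ⟨?_, ?_⟩
  · rcases eq_or_ne (B u) f with rfl | hBf
    · simp
    · have herr : 0 < ‖u - B.symm f‖ :=
        norm_pos_iff.2 <| sub_ne_zero.2 fun h => hBf (by rw [h, B.apply_symm_apply])
      exact (le_div_iff₀ herr).1 <|
        (hinf u hu f hf hBf).trans (sSup_le_div_of_inner_eq herr (hR u f))
  · calc ‖R u f‖ ≤ ‖B u - f‖ := norm_le_opNorm_of_inner_eq (hR_mem u f) (hR u f)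
      _ = ‖B (u - B.symm f)‖ := by simp
      _ ≤ _ := (B : U →L[ℝ] StrongDual ℝ V).le_opNorm _

/-- Two-sided bounds for the projected lifted residual: for `(u,f)` in the discrete
trial and data spaces, `γ‖u − B⁻¹f‖ ≤ ‖R^δ(u;f)‖ ≤ ‖B‖·‖u − B⁻¹f‖`. -/
theorem stmt2
    {U V : Type*}
    [NormedAddCommGroup U] [InnerProductSpace ℝ U] [CompleteSpace U]
    [NormedAddCommGroup V] [InnerProductSpace ℝ V] [CompleteSpace V]
    (B : U ≃L[ℝ] StrongDual ℝ V)
    (Uδ : Submodule ℝ U) [FiniteDimensional ℝ Uδ]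
    (Fδ : Submodule ℝ (StrongDual ℝ V)) [FiniteDimensional ℝ Fδ]
    (W : Submodule ℝ V) (hW : IsClosed (W : Set V))
    (γ : ℝ) (hγ : 0 < γ)
    (hinf : ∀ u ∈ Uδ, ∀ f ∈ Fδ, B u ≠ f →
      γ ≤ sSup {r : ℝ | ∃ v ∈ W, v ≠ 0 ∧
        r = (B u v - f v) / (‖u - B.symm f‖ * ‖v‖)})
    (R : U → StrongDual ℝ V → V)
    (hR_mem : ∀ u f, R u f ∈ W)
    (hR : ∀ u f, ∀ v ∈ W, ⟪R u f, v⟫ = B u v - f v) :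
    ∀ u ∈ Uδ, ∀ f ∈ Fδ,
      γ * ‖u - B.symm f‖ ≤ ‖R u f‖ ∧
        ‖R u f‖ ≤ ‖(B : U →L[ℝ] StrongDual ℝ V)‖ * ‖u - B.symm f‖ :=
  stmt2_general B Uδ Fδ W γ hinf R hR_mem hR
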